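/- Grammars controlled by context-free Petri nets with place capacity functions generate exactly the family of capacity-bounded context-free languages: for every capacity-bounded context-free grammar there is an equivalent cf-Petri-net-controlled grammar with place capacities, and conversely. -/
import Mathlib


/-! Common definitions: symbols, context-free grammars, Ginsburg–Spanier phrase
structure grammars, capacity-bounded derivations, matrix/vector grammars,
finite index, cf Petri nets with place capacities, and language families. -/

inductive Symb (N T : Type) where
  | nt : N → Symb N T
  | tm : T → Symb N T
deriving DecidableEq

namespace CapGram

variable {N T Δ α : Type}

open Classical in
/-- Number of occurrences of the nonterminal `A` in a sentential form. -/
noncomputable def symCount (A : N) : List (Symb N T) → ℕ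
  | [] => 0
  | Symb.nt B :: r => (if B = A then 1 else 0) + symCount A r
  | Symb.tm _ :: r => symCount A r

/-- Total number of nonterminal occurrences in a sentential form. -/
def ntCount : List (Symb N T) → ℕ
  | [] => 0
  | Symb.nt _ :: r => 1 + ntCount r
  | Symb.tm _ :: r => ntCount r

/-- The sentential form `w` respects the capacity function `κ`. -/
def CapOK (κ : N → ℕ) (w : List (Symb N T)) : Prop :=
  ∀ A : N, symCount A w ≤ κ A

/-- A context-free grammar (rules are pairs of a nonterminal and a word). -/
structure CFG (N T : Type) where
  start : N
  rules : Finset (N × List (Symb N T))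

/-- Application of a single context-free rule. -/
def applyRule (r : N × List (Symb N T)) (u v : List (Symb N T)) : Prop :=
  ∃ x y : List (Symb N T), u = x ++ Symb.nt r.1 :: y ∧ v = x ++ r.2 ++ y

def CFG.Step (G : CFG N T) (u v : List (Symb N T)) : Prop :=
  ∃ r ∈ G.rules, applyRule r u v

/-- A derivation step both of whose sentential forms respect the capacity. -/
def CFG.CapStep (G : CFG N T) (κ : N → ℕ) (u v : List (Symb N T)) : Prop :=
  G.Step u v ∧ CapOK κ u ∧ CapOK κ v

/-- A derivation step both of whose sentential forms have at most `k`
nonterminal occurrences in total. -/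
def CFG.IdxStep (G : CFG N T) (k : ℕ) (u v : List (Symb N T)) : Prop :=
  G.Step u v ∧ ntCount u ≤ k ∧ ntCount v ≤ k

/-- The (unrestricted) language of a context-free grammar. -/
def CFG.Lang (G : CFG N T) : Set (List T) :=
  { w | Relation.ReflTransGen G.Step [Symb.nt G.start] (w.map Symb.tm) }

/-- The language of the capacity-bounded grammar `(G, κ)`. -/
def CFG.CapLang (G : CFG N T) (κ : N → ℕ) : Set (List T) :=
  { w | Relation.ReflTransGen (G.CapStep κ) [Symb.nt G.start] (w.map Symb.tm) }

/-- Words with a derivation of index at most `k`. -/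
def CFG.FinLang (G : CFG N T) (k : ℕ) : Set (List T) :=
  { w | Relation.ReflTransGen (G.IdxStep k) [Symb.nt G.start] (w.map Symb.tm) }

/-- A phrase structure grammar due to Ginsburg and Spanier: the left-hand side
of a rule is a nonempty word of nonterminals, encoded as head and tail. -/
structure GSG (N T : Type) where
  start : N
  rules : Finset ((N × List N) × List (Symb N T))

def GSG.Step (G : GSG N T) (u v : List (Symb N T)) : Prop :=
  ∃ r ∈ G.rules, ∃ x y : List (Symb N T),
    u = x ++ (r.1.1 :: r.1.2).map Symb.nt ++ y ∧ v = x ++ r.2 ++ y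

def GSG.CapStep (G : GSG N T) (κ : N → ℕ) (u v : List (Symb N T)) : Prop :=
  G.Step u v ∧ CapOK κ u ∧ CapOK κ v

def GSG.Lang (G : GSG N T) : Set (List T) :=
  { w | Relation.ReflTransGen G.Step [Symb.nt G.start] (w.map Symb.tm) }

def GSG.CapLang (G : GSG N T) (κ : N → ℕ) : Set (List T) :=
  { w | Relation.ReflTransGen (G.CapStep κ) [Symb.nt G.start] (w.map Symb.tm) }

/-- Derivations labeled by their sequence of context-free rules, where every
sentential form (including the first and last) satisfies the invariant `P`. -/
inductive DerivP (P : List (Symb N T) → Prop) :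
    List (N × List (Symb N T)) → List (Symb N T) → List (Symb N T) → Prop
  | nil (u : List (Symb N T)) : P u → DerivP P [] u u
  | cons {r π u v w} : P u → applyRule r u v → DerivP P π v w →
      DerivP P (r :: π) u w

/-- A matrix grammar: a finite set of matrices (sequences of cf rules). -/
structure MG (N T : Type) where
  start : N
  mats : Finset (List (N × List (Symb N T)))

/-- Matrix language: rule sequences are concatenations of matrices. -/
def MG.Lang (G : MG N T) : Set (List T) :=
  { w | ∃ ms : List (List (N × List (Symb N T))),
      (∀ m ∈ ms, m ∈ G.mats) ∧
      DerivP (fun _ => True) ms.flatten [Symb.nt G.start] (w.map Symb.tm) }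

/-- Words with a matrix derivation of index at most `k`. -/
def MG.FinLang (G : MG N T) (k : ℕ) : Set (List T) :=
  { w | ∃ ms : List (List (N × List (Symb N T))),
      (∀ m ∈ ms, m ∈ G.mats) ∧
      DerivP (fun u => ntCount u ≤ k) ms.flatten [Symb.nt G.start] (w.map Symb.tm) }

/-- `Shuffle ms π`: `π` is an interleaving (shuffle) of the lists in `ms`. -/
inductive Shuffle : List (List α) → List α → Prop
  | nil (ms : List (List α)) : (∀ l ∈ ms, l = []) → Shuffle ms []
  | cons {ms₁ : List (List α)} {l : List α} {ms₂ : List (List α)} {π : List α}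
      (a : α) : Shuffle (ms₁ ++ l :: ms₂) π →
      Shuffle (ms₁ ++ (a :: l) :: ms₂) (a :: π)

/-- A vector grammar: like a matrix grammar, but derivations use shuffles. -/
structure VG (N T : Type) where
  start : N
  mats : Finset (List (N × List (Symb N T)))

def VG.Lang (G : VG N T) : Set (List T) :=
  { w | ∃ ms π, (∀ m ∈ ms, m ∈ G.mats) ∧ Shuffle ms π ∧
      DerivP (fun _ => True) π [Symb.nt G.start] (w.map Symb.tm) }

def VG.CapLang (G : VG N T) (κ : N → ℕ) : Set (List T) :=
  { w | ∃ ms π, (∀ m ∈ ms, m ∈ G.mats) ∧ Shuffle ms π ∧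
      DerivP (CapOK κ) π [Symb.nt G.start] (w.map Symb.tm) }

def VG.FinLang (G : VG N T) (k : ℕ) : Set (List T) :=
  { w | ∃ ms π, (∀ m ∈ ms, m ∈ G.mats) ∧ Shuffle ms π ∧
      DerivP (fun u => ntCount u ≤ k) π [Symb.nt G.start] (w.map Symb.tm) }

/-! cf Petri nets: places are in bijection with the nonterminals, transitions
with the rules; firing the transition of rule `A → α` consumes one token from
the place of `A` and adds `|α|_X` tokens to the place of each nonterminal `X`. -/

open Classical in
/-- Firing of the transition corresponding to rule `r`, turning marking `μ`
into marking `μ'`. -/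
noncomputable def ruleFire (r : N × List (Symb N T)) (μ μ' : N → ℕ) : Prop :=
  1 ≤ μ r.1 ∧ ∀ A, μ' A = μ A - (if A = r.1 then 1 else 0) + symCount A r.2

/-- Occurrence sequences of the cf Petri net of `G`, all of whose markings
(including initial and final) satisfy the validity predicate `P`. -/
inductive FireSeqP (G : CFG N T) (P : (N → ℕ) → Prop) :
    List (N × List (Symb N T)) → (N → ℕ) → (N → ℕ) → Prop
  | nil (μ : N → ℕ) : P μ → FireSeqP G P [] μ μ
  | cons {r π μ μ' μ''} : r ∈ G.rules → P μ → ruleFire r μ μ' →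
      FireSeqP G P π μ' μ'' → FireSeqP G P (r :: π) μ μ''

open Classical in
/-- The initial marking: one token on the place of the start symbol. -/
noncomputable def initMark (G : CFG N T) : N → ℕ :=
  fun A => if A = G.start then 1 else 0

/-- The language of `G` controlled by its cf Petri net restricted to markings
satisfying `P` (e.g. a place capacity constraint). -/
def CFG.PNLang (G : CFG N T) (P : (N → ℕ) → Prop) : Set (List T) :=
  { w | ∃ π μ, DerivP (fun _ => True) π [Symb.nt G.start] (w.map Symb.tm) ∧
      FireSeqP G P π (initMark G) μ }

/-! Language families over a terminal alphabet `T`. -/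

/-- Context-free languages of finite index. -/
def CFfin (T : Type) : Set (Set (List T)) :=
  { L | ∃ (N : Type) (_ : Fintype N) (G : CFG N T) (k : ℕ),
      L = G.Lang ∧ G.Lang ⊆ G.FinLang k }

/-- Languages of capacity-bounded context-free grammars. -/
def CFcb (T : Type) : Set (Set (List T)) :=
  { L | ∃ (N : Type) (_ : Fintype N) (G : CFG N T) (κ : N → ℕ),
      L = G.CapLang κ }

/-- Languages of capacity-bounded Ginsburg–Spanier phrase structure grammars. -/
def GScb (T : Type) : Set (Set (List T)) :=
  { L | ∃ (N : Type) (_ : Fintype N) (G : GSG N T) (κ : N → ℕ),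
      L = G.CapLang κ }

/-- Matrix languages of finite index. -/
def MATfin (T : Type) : Set (Set (List T)) :=
  { L | ∃ (N : Type) (_ : Fintype N) (G : MG N T) (k : ℕ),
      L = G.Lang ∧ G.Lang ⊆ G.FinLang k }

/-- Capacity-bounded vector languages (erasing rules allowed). -/
def Vcb (T : Type) : Set (Set (List T)) :=
  { L | ∃ (N : Type) (_ : Fintype N) (G : VG N T) (κ : N → ℕ),
      L = G.CapLang κ }

/-- Vector languages of finite index (erasing rules allowed). -/
def Vfin (T : Type) : Set (Set (List T)) :=
  { L | ∃ (N : Type) (_ : Fintype N) (G : VG N T) (k : ℕ),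
      L = G.Lang ∧ G.Lang ⊆ G.FinLang k }

/-- Languages of grammars controlled by cf Petri nets with place capacities. -/
def PNcap (T : Type) : Set (Set (List T)) :=
  { L | ∃ (N : Type) (_ : Fintype N) (G : CFG N T) (κ : N → ℕ),
      L = G.PNLang (fun μ => ∀ A, μ A ≤ κ A) }



/-! Auxiliary lemmas for Statement 19. -/

noncomputable def cnt (u : List (Symb N T)) : N → ℕ := fun A => symCount A u

lemma symCount_append (A : N) (x y : List (Symb N T)) :
    symCount A (x ++ y) = symCount A x + symCount A y := by
  induction x with
  | nil => simp [symCount]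
  | cons a r ih => cases a <;> simp [symCount, ih] <;> ring

lemma symCount_map_tm (A : N) (w : List T) :
    symCount A (w.map Symb.tm) = 0 := by
  induction w with
  | nil => rfl
  | cons a r ih => simpa [symCount] using ih

lemma cnt_applyRule {r : N × List (Symb N T)} {u v : List (Symb N T)}
    (h : applyRule r u v) : ruleFire r (cnt u) (cnt v) := by
  obtain ⟨x, y, hu, hv⟩ := h
  constructor
  · subst hu
    simp [cnt, symCount_append, symCount]
    omega
  · intro A
    subst hu; subst hv
    by_cases hA : A = r.1
    · subst hA
      simp [cnt, symCount_append, symCount]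
      omega
    · simp [cnt, symCount_append, symCount, hA, Ne.symm hA]
      omega

lemma fireSeqP_head {G : CFG N T} {P : (N → ℕ) → Prop}
    {π : List (N × List (Symb N T))} {μ μ' : N → ℕ}
    (h : FireSeqP G P π μ μ') : P μ := by
  cases h <;> assumption

lemma pn_to_cap {G : CFG N T} {κ : N → ℕ} {π : List (N × List (Symb N T))}
    {u w : List (Symb N T)}
    (hd : DerivP (fun _ => True) π u w) :
    ∀ {μ μf : N → ℕ}, μ = cnt u →
      FireSeqP G (fun ν => ∀ A, ν A ≤ κ A) π μ μf →
      Relation.ReflTransGen (G.CapStep κ) u w := by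
  induction hd with
  | nil u _ => intro μ μf _ _; exact Relation.ReflTransGen.refl
  | @cons r π u v w _ hap hrest ih =>
    intro μ μf hμ hf
    cases hf with
    | @cons _ _ _ μ' _ hmem hP hfire hf' =>
      have hμ' : μ' = cnt v := by
        funext A
        rw [hfire.2 A, (cnt_applyRule hap).2 A, hμ]
      have hcapu : CapOK κ u := fun A => by
        have := hP A; rwa [hμ] at this
      have hcapv : CapOK κ v := fun A => by
        have := fireSeqP_head hf' A; rwa [hμ'] at this
      exact Relation.ReflTransGen.head
        ⟨⟨r, hmem, hap⟩, hcapu, hcapv⟩ (ih hμ' hf')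

lemma cap_to_pn {G : CFG N T} {κ : N → ℕ} {u v : List (Symb N T)}
    (h : Relation.ReflTransGen (G.CapStep κ) u v)
    (hv : ∀ A, cnt v A ≤ κ A) :
    ∃ π, DerivP (fun _ => True) π u v ∧
      FireSeqP G (fun ν => ∀ A, ν A ≤ κ A) π (cnt u) (cnt v) := by
  induction h using Relation.ReflTransGen.head_induction_on with
  | refl => exact ⟨[], DerivP.nil _ trivial, FireSeqP.nil _ hv⟩
  | head hstep _ ih =>
    obtain ⟨π, hd, hf⟩ := ih
    obtain ⟨⟨r, hmem, hap⟩, hcu, _⟩ := hstep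
    exact ⟨r :: π, DerivP.cons trivial hap hd,
      FireSeqP.cons hmem hcu (cnt_applyRule hap) hf⟩

lemma initMark_eq_cnt (G : CFG N T) :
    initMark G = cnt ([Symb.nt G.start] : List (Symb N T)) := by
  funext A
  by_cases h : A = G.start
  · subst h; simp [initMark, cnt, symCount]
  · simp [initMark, cnt, symCount, h, Ne.symm h]

lemma pnLang_eq_capLang (G : CFG N T) (κ : N → ℕ) :
    G.PNLang (fun μ => ∀ A, μ A ≤ κ A) = G.CapLang κ := by
  ext w
  constructor
  · rintro ⟨π, μ, hd, hf⟩
    exact pn_to_cap hd (initMark_eq_cnt G) hf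
  · intro h
    have hv : ∀ A, cnt (w.map Symb.tm) A ≤ κ A := fun A => by
      simp [cnt, symCount_map_tm]
    obtain ⟨π, hd, hf⟩ := cap_to_pn h hv
    exact ⟨π, _, hd, (initMark_eq_cnt G) ▸ hf⟩

/-- grammars controlled by cf Petri nets with place capacities
generate exactly the capacity-bounded context-free languages. -/
theorem PNcap_eq_CFcb (T : Type) : PNcap T = CFcb T := by
  ext L
  constructor
  · rintro ⟨N, iN, G, κ, rfl⟩
    exact ⟨N, iN, G, κ, (pnLang_eq_capLang G κ).symm ▸ rfl⟩
  · rintro ⟨N, iN, G, κ, rfl⟩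
    exact ⟨N, iN, G, κ, (pnLang_eq_capLang G κ).symm⟩

end CapGram
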